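/- The subgroup W ≤ GL(F) generated by s_0, s_1, …, s_n has index 2 in the subgroup W^{B∨,RY} ≤ GL(F) generated by s_0, s_1, …, s_n and π^{B∨}: one has W^{B∨,RY} = W ∪ π^{B∨}·W (disjoint union), and π^{B∨} ∉ W. -/

import Mathlib

noncomputable section

namespace CvC

/-- Ambient space `F = ℝⁿ ⊕ ℝc`. -/
abbrev F (n : ℕ) := (Fin n → ℝ) × ℝ

/-- Bilinear form `⟨v + rc, w + sc⟩ = v ⬝ w`. -/
def bform (n : ℕ) (x y : F n) : ℝ := ∑ i, x.1 i * y.1 i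

/-- The constant function `c`. -/
def cvec (n : ℕ) : F n := (0, 1)

/-- `eps n i` is the basis vector `ε_i`, for `1 ≤ i ≤ n` (1-based; junk value `0` out of range). -/
def eps (n i : ℕ) : F n :=
  if h : 1 ≤ i ∧ i ≤ n then (Pi.single (⟨i - 1, by omega⟩ : Fin n) 1, 0) else 0

lemma bform_add_left (n : ℕ) (x y z : F n) :
    bform n (x + y) z = bform n x z + bform n y z := by
  simp [bform, add_mul, Finset.sum_add_distrib]

lemma bform_smul_left (n : ℕ) (c : ℝ) (x z : F n) :
    bform n (c • x) z = c * bform n x z := by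
  simp [bform, Finset.mul_sum, mul_assoc]

lemma bform_sub_left (n : ℕ) (x y z : F n) :
    bform n (x - y) z = bform n x z - bform n y z := by
  simp [bform, sub_mul, Finset.sum_sub_distrib]

/-- Reflection `s_f(g) = g − ⟨g, f^∨⟩ f`, `f^∨ = (2/⟨f,f⟩) f`, as a linear endomorphism. -/
def reflMap (n : ℕ) (f : F n) : Module.End ℝ (F n) where
  toFun g := g - ((2 / bform n f f) * bform n g f) • f
  map_add' x y := by
    rw [bform_add_left, mul_add, add_smul]; abel
  map_smul' c x := by
    simp only [RingHom.id_apply]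
    rw [bform_smul_left, smul_sub, smul_smul, mul_left_comm]

@[simp] lemma reflMap_apply (n : ℕ) (f g : F n) :
    reflMap n f g = g - ((2 / bform n f f) * bform n g f) • f := rfl

lemma reflMap_invol (n : ℕ) (f : F n) (hf : bform n f f ≠ 0) (g : F n) :
    reflMap n f (reflMap n f g) = g := by
  simp only [reflMap_apply]
  rw [bform_sub_left, bform_smul_left, sub_sub, ← add_smul]
  have key : (2 / bform n f f) * bform n g f +
      (2 / bform n f f) * (bform n g f - (2 / bform n f f) * bform n g f * bform n f f) = 0 := by
    field_simp
    ring
  rw [key, zero_smul, sub_zero]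

/-- Translation `t(v)(f) = f − ⟨f, v⟩c`, as a linear endomorphism. -/
def tMap (n : ℕ) (v : Fin n → ℝ) : Module.End ℝ (F n) where
  toFun g := g - bform n g (v, 0) • cvec n
  map_add' x y := by
    rw [bform_add_left, add_smul]; abel
  map_smul' c x := by
    simp only [RingHom.id_apply]
    rw [bform_smul_left, smul_sub, smul_smul]

@[simp] lemma tMap_apply (n : ℕ) (v : Fin n → ℝ) (g : F n) :
    tMap n v g = g - bform n g (v, 0) • cvec n := rfl

lemma bform_pair_add (n : ℕ) (g : F n) (v w : Fin n → ℝ) :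
    bform n g (v + w, 0) = bform n g (v, 0) + bform n g (w, 0) := by
  simp [bform, mul_add, Finset.sum_add_distrib]

lemma tMap_mul (n : ℕ) (v w : Fin n → ℝ) :
    tMap n v * tMap n w = tMap n (v + w) := by
  apply LinearMap.ext; intro g
  rw [Module.End.mul_apply]
  simp only [tMap_apply]
  rw [bform_sub_left, bform_smul_left]
  have hc : bform n (cvec n) (v, 0) = 0 := by simp [bform, cvec]
  rw [hc, mul_zero, sub_zero, bform_pair_add, add_smul]
  abel

lemma tMap_zero (n : ℕ) : tMap n 0 = 1 := by
  apply LinearMap.ext; intro g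
  rw [Module.End.one_apply, tMap_apply]
  have h0 : bform n g ((0 : Fin n → ℝ), 0) = 0 := by simp [bform]
  rw [h0, zero_smul, sub_zero]

/-- Translation `t(v)` as an invertible endomorphism. -/
def tU (n : ℕ) (v : Fin n → ℝ) : (Module.End ℝ (F n))ˣ where
  val := tMap n v
  inv := tMap n (-v)
  val_inv := by rw [tMap_mul, add_neg_cancel, tMap_zero]
  inv_val := by rw [tMap_mul, neg_add_cancel, tMap_zero]

/-- Reflection `s_f` as an invertible endomorphism (junk value `1` if `⟨f,f⟩ = 0`). -/
def reflE (n : ℕ) (f : F n) : (Module.End ℝ (F n))ˣ :=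
  if hf : bform n f f ≠ 0 then
    { val := reflMap n f
      inv := reflMap n f
      val_inv := by
        apply LinearMap.ext; intro g
        rw [Module.End.mul_apply, Module.End.one_apply]
        exact reflMap_invol n f hf g
      inv_val := by
        apply LinearMap.ext; intro g
        rw [Module.End.mul_apply, Module.End.one_apply]
        exact reflMap_invol n f hf g }
  else 1

/-- The simple affine roots `a_0, a_1, …, a_n` of type `(C_n^∨, C_n)`:
`a_0 = −2ε_1 + c`, `a_j = ε_j − ε_{j+1}` for `1 ≤ j ≤ n−1`, `a_n = 2ε_n`. -/
def aRootF (n k : ℕ) : F n :=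
  if k = 0 then (-(2:ℝ)) • eps n 1 + cvec n
  else if k = n then (2:ℝ) • eps n n
  else eps n k - eps n (k + 1)

/-- The generators `s_0, s_1, …, s_n` of the extended affine Weyl group of type
`(C_n^∨, C_n)`: `s_0 = t(ε_1) ∘ s_{2ε_1}` and `s_i = s_{a_i}` for `1 ≤ i ≤ n`. -/
def sgen (n k : ℕ) : (Module.End ℝ (F n))ˣ :=
  if k = 0 then tU n (eps n 1).1 * reflE n ((2:ℝ) • eps n 1)
  else reflE n (aRootF n k)

/-- The finite Weyl group `W_0 = ⟨s_1, …, s_n⟩` of type `C_n`. -/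
def W0grp (n : ℕ) : Subgroup (Module.End ℝ (F n))ˣ :=
  Subgroup.closure (sgen n '' Set.Icc 1 n)

/-- The extended affine Weyl group `W = ⟨s_0, s_1, …, s_n⟩` of type `(C_n^∨, C_n)`. -/
def Wgrp (n : ℕ) : Subgroup (Module.End ℝ (F n))ˣ :=
  Subgroup.closure (sgen n '' Set.Icc 0 n)

/-- Product of the generators `s_k` along a list of indices. -/
def du (n : ℕ) (l : List ℕ) : (Module.End ℝ (F n))ˣ := (l.map (sgen n)).prod

/-- The weight lattice `P_{C_n} = ℤε_1 ⊕ ⋯ ⊕ ℤε_n` (as a subset of `ℝⁿ`). -/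
def PC (n : ℕ) : Set (Fin n → ℝ) := { v | ∀ i, ∃ m : ℤ, v i = m }

/-- The weight lattice `P_{B_n} = P_{C_n} + ℤ·(1/2)(ε_1 + ⋯ + ε_n)` (as a subset of `ℝⁿ`). -/
def PB (n : ℕ) : Set (Fin n → ℝ) := { v | ∃ k : ℤ, ∀ i, ∃ m : ℤ, v i = m + (k : ℝ)/2 }

/-- `O_1 = {±ε_i + rc}`. -/
def O1 (n : ℕ) : Set (F n) :=
  { x | ∃ i, 1 ≤ i ∧ i ≤ n ∧ ∃ r : ℤ,
      x = eps n i + (r : ℝ) • cvec n ∨ x = -eps n i + (r : ℝ) • cvec n }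

/-- `O_2 = {±2ε_i + 2rc}`. -/
def O2 (n : ℕ) : Set (F n) :=
  { x | ∃ i, 1 ≤ i ∧ i ≤ n ∧ ∃ r : ℤ,
      x = (2:ℝ) • eps n i + ((2*r : ℤ) : ℝ) • cvec n ∨
      x = -((2:ℝ) • eps n i) + ((2*r : ℤ) : ℝ) • cvec n }

/-- `O_3 = {±ε_i + (r + 1/2)c}`. -/
def O3 (n : ℕ) : Set (F n) :=
  { x | ∃ i, 1 ≤ i ∧ i ≤ n ∧ ∃ r : ℤ,
      x = eps n i + ((r : ℝ) + 1/2) • cvec n ∨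
      x = -eps n i + ((r : ℝ) + 1/2) • cvec n }

/-- `O_4 = {±2ε_i + (2r+1)c}`. -/
def O4 (n : ℕ) : Set (F n) :=
  { x | ∃ i, 1 ≤ i ∧ i ≤ n ∧ ∃ r : ℤ,
      x = (2:ℝ) • eps n i + ((2*r+1 : ℤ) : ℝ) • cvec n ∨
      x = -((2:ℝ) • eps n i) + ((2*r+1 : ℤ) : ℝ) • cvec n }

/-- `O_5 = {±ε_i ± ε_j + rc, i < j}`. -/
def O5 (n : ℕ) : Set (F n) :=
  { x | ∃ i j, 1 ≤ i ∧ i < j ∧ j ≤ n ∧ ∃ r : ℤ,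
      x = eps n i + eps n j + (r : ℝ) • cvec n ∨
      x = eps n i - eps n j + (r : ℝ) • cvec n ∨
      x = -eps n i + eps n j + (r : ℝ) • cvec n ∨
      x = -eps n i - eps n j + (r : ℝ) • cvec n }

/-- The five `W`-orbits `O_1, …, O_5` of the affine root system of type `(C_n^∨, C_n)`. -/
def OO (n : ℕ) : Fin 5 → Set (F n) := ![O1 n, O2 n, O3 n, O4 n, O5 n]

/-- The affine root system `S` of type `(C_n^∨, C_n)`. -/
def Sset (n : ℕ) : Set (F n) := O1 n ∪ O2 n ∪ O3 n ∪ O4 n ∪ O5 n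

/-- The set `R̃₊ = {ε_i} ∪ {2ε_i} ∪ {ε_i ± ε_j : i < j}`. -/
def Rtplus (n : ℕ) : Set (F n) :=
  { x | (∃ i, 1 ≤ i ∧ i ≤ n ∧ (x = eps n i ∨ x = (2:ℝ) • eps n i)) ∨
        (∃ i j, 1 ≤ i ∧ i < j ∧ j ≤ n ∧ (x = eps n i + eps n j ∨ x = eps n i - eps n j)) }

/-- The set of positive affine roots `S⁺`. -/
def Splus (n : ℕ) : Set (F n) :=
  { x ∈ Sset n | 0 < x.2 } ∪ (Sset n ∩ Rtplus n)

lemma sum_single_mul (n : ℕ) (j : Fin n) (v : Fin n → ℝ) :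
    ∑ k, v k * (Pi.single j 1 : Fin n → ℝ) k = v j := by
  rw [Finset.sum_eq_single j]
  · simp
  · intro k _ hk
    simp [Pi.single_apply, hk]
  · intro h; exact absurd (Finset.mem_univ j) h

lemma bform_eps_right (n : ℕ) (x : F n) (i : ℕ) (h1 : 1 ≤ i) (h2 : i ≤ n) :
    bform n x (eps n i) = x.1 ⟨i - 1, by omega⟩ := by
  unfold bform eps
  rw [dif_pos ⟨h1, h2⟩]
  exact sum_single_mul n _ x.1

lemma bform_eps_eps (n i : ℕ) (h1 : 1 ≤ i) (h2 : i ≤ n) :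
    bform n (eps n i) (eps n i) = 1 := by
  rw [bform_eps_right n _ i h1 h2]
  unfold eps
  rw [dif_pos ⟨h1, h2⟩]
  simp

/-- `π^{C∨} = π^D`: the linear map with `ε_1 ↦ c − ε_1`, `ε_i ↦ ε_i` (`i ≥ 2`), `c ↦ c`. -/
def piCMap (n : ℕ) : Module.End ℝ (F n) where
  toFun g := g - bform n g (eps n 1) • ((2:ℝ) • eps n 1 - cvec n)
  map_add' x y := by
    rw [bform_add_left, add_smul]; abel
  map_smul' c x := by
    simp only [RingHom.id_apply]
    rw [bform_smul_left, smul_sub c, smul_smul]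

@[simp] lemma piCMap_apply (n : ℕ) (g : F n) :
    piCMap n g = g - bform n g (eps n 1) • ((2:ℝ) • eps n 1 - cvec n) := rfl

lemma piCMap_invol (n : ℕ) (g : F n) : piCMap n (piCMap n g) = g := by
  rcases Nat.eq_zero_or_pos n with h0 | hpos
  · subst h0
    have he : eps 0 1 = 0 := by simp [eps]
    simp [piCMap_apply, he, bform]
  · have hE := bform_eps_eps n 1 le_rfl hpos
    have hc : bform n (cvec n) (eps n 1) = 0 := by simp [bform, cvec]
    simp only [piCMap_apply]
    rw [bform_sub_left, bform_smul_left, bform_sub_left, bform_smul_left, hE, hc]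
    rw [sub_sub, ← add_smul]
    have key : bform n g (eps n 1) +
        (bform n g (eps n 1) - bform n g (eps n 1) * (2 * 1 - 0)) = 0 := by ring
    rw [key, zero_smul, sub_zero]

/-- `π^{C∨}` as an invertible endomorphism. -/
def piCU (n : ℕ) : (Module.End ℝ (F n))ˣ where
  val := piCMap n
  inv := piCMap n
  val_inv := by
    apply LinearMap.ext; intro g
    rw [Module.End.mul_apply, Module.End.one_apply]
    exact piCMap_invol n g
  inv_val := by
    apply LinearMap.ext; intro g
    rw [Module.End.mul_apply, Module.End.one_apply]
    exact piCMap_invol n g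

/-- `π^{B∨}`: the linear map with `ε_i ↦ (1/2)c − ε_{n−i+1}` and `c ↦ c`. -/
def piBMap (n : ℕ) : Module.End ℝ (F n) where
  toFun g := (fun i => -(g.1 (Fin.rev i)), g.2 + (1/2) * ∑ i, g.1 i)
  map_add' x y := by
    refine Prod.ext ?_ ?_
    · funext i; simp [neg_add]; ring
    · simp [Finset.sum_add_distrib]; ring
  map_smul' c x := by
    simp only [RingHom.id_apply]
    refine Prod.ext ?_ ?_
    · funext i; simp [mul_comm]
    · simp only [Prod.smul_snd, Prod.smul_fst, Pi.smul_apply, smul_eq_mul, Finset.mul_sum,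
        mul_add]
      congr 1
      exact Finset.sum_congr rfl fun i _ => by ring

@[simp] lemma piBMap_apply (n : ℕ) (g : F n) :
    piBMap n g = (fun i => -(g.1 (Fin.rev i)), g.2 + (1/2) * ∑ i, g.1 i) := rfl

lemma piBMap_invol (n : ℕ) (g : F n) : piBMap n (piBMap n g) = g := by
  simp only [piBMap_apply]
  refine Prod.ext ?_ ?_
  · funext i; simp
  · have h : ∑ i, -(g.1 (Fin.rev i)) = -∑ i, g.1 i := by
      rw [← Finset.sum_neg_distrib]
      exact Equiv.sum_comp (Equiv.mk Fin.rev Fin.rev Fin.rev_rev Fin.rev_rev) (fun i => -(g.1 i))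
    dsimp only
    rw [h]
    ring

/-- `π^{B∨}` as an invertible endomorphism. -/
def piBU (n : ℕ) : (Module.End ℝ (F n))ˣ where
  val := piBMap n
  inv := piBMap n
  val_inv := by
    apply LinearMap.ext; intro g
    rw [Module.End.mul_apply, Module.End.one_apply]
    exact piBMap_invol n g
  inv_val := by
    apply LinearMap.ext; intro g
    rw [Module.End.mul_apply, Module.End.one_apply]
    exact piBMap_invol n g

/-- The affine root `a_0^{C∨} = −(ε_1 + ε_2) + c` of Ram–Yip type `C_n^∨`. -/
def a0C (n : ℕ) : F n := -(eps n 1 + eps n 2) + cvec n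

/-- The reflection `s_0^{C∨} = s_{a_0^{C∨}}`. -/
def s0C (n : ℕ) : (Module.End ℝ (F n))ˣ := reflE n (a0C n)

/-- The extended affine Weyl group of Ram–Yip type `C_n^∨`:
`W^{C∨,RY} = ⟨s_0^{C∨}, s_1, …, s_n, π^{C∨}⟩`. -/
def WCRY (n : ℕ) : Subgroup (Module.End ℝ (F n))ˣ :=
  Subgroup.closure ({s0C n, piCU n} ∪ sgen n '' Set.Icc 1 n)

/-- The extended affine Weyl group of Ram–Yip type `B_n^∨`:
`W^{B∨,RY} = ⟨s_0, s_1, …, s_n, π^{B∨}⟩`. -/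
def WBRY (n : ℕ) : Subgroup (Module.End ℝ (F n))ˣ :=
  Subgroup.closure (insert (piBU n) (sgen n '' Set.Icc 0 n))

/-- The subgroup generated by `W_0` together with all the translations `t(μ)`, `μ ∈ P_{B_n}`. -/
def WBtrans (n : ℕ) : Subgroup (Module.End ℝ (F n))ˣ :=
  Subgroup.closure ((sgen n '' Set.Icc 1 n) ∪ (tU n '' PB n))

/-- The defining relators of the extended affine Weyl group of type `(C_n^∨, C_n)`
on the generators `σ_0, …, σ_n`. -/
def rels (n : ℕ) : Set (FreeGroup (Fin (n + 1))) :=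
  { r | (∃ i : Fin (n+1), r = FreeGroup.of i * FreeGroup.of i) ∨
        (∃ i j : Fin (n+1), ((i:ℕ) + 1 < (j:ℕ) ∨ (j:ℕ) + 1 < (i:ℕ)) ∧
          r = FreeGroup.of i * FreeGroup.of j * (FreeGroup.of i)⁻¹ * (FreeGroup.of j)⁻¹) ∨
        (∃ i j : Fin (n+1), 1 ≤ (i:ℕ) ∧ (i:ℕ) ≤ n - 2 ∧ (j:ℕ) = (i:ℕ) + 1 ∧
          r = FreeGroup.of i * FreeGroup.of j * FreeGroup.of i *
              ((FreeGroup.of j)⁻¹ * (FreeGroup.of i)⁻¹ * (FreeGroup.of j)⁻¹)) ∨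
        (∃ i j : Fin (n+1), ((i:ℕ) = 0 ∨ (i:ℕ) = n - 1) ∧ (j:ℕ) = (i:ℕ) + 1 ∧
          r = FreeGroup.of i * FreeGroup.of j * FreeGroup.of i * FreeGroup.of j *
              ((FreeGroup.of i)⁻¹ * (FreeGroup.of j)⁻¹ * (FreeGroup.of i)⁻¹ *
                (FreeGroup.of j)⁻¹)) }

/-! `π = π^{B∨}` is an involutive isometry of the form mapping the simple affine roots by
`a_k ↦ a_{n-k}`. Conjugating a reflection by an isometry gives the reflection in the image root,
so `π s_k π = s_{n-k}`: `π` normalizes `W`, and `W^{B∨,RY} = W ∪ πW`. On the other hand every `s_k`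
is a reflection in a vector of the lattice `ℤⁿ × ℤc` whose coroot pairs integrally with that
lattice, so `W` preserves it, while `π ε_1 = c/2 − ε_n` leaves it; hence `π ∉ W`. -/

end CvC

open scoped Pointwise

namespace Subgroup

variable {G : Type*} [Group G]

theorem coe_closure_singleton_of_mul_self_eq_one {p : G} (hp : p * p = 1) :
    (closure {p} : Set G) = {1, p} := by
  ext x
  simp only [SetLike.mem_coe, mem_closure_singleton, Set.mem_insert_iff,
    Set.mem_singleton_iff]
  have hp2 : p ^ (2 : ℤ) = 1 := by rw [zpow_two, hp]
  constructor
  · rintro ⟨k, rfl⟩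
    rw [zpow_eq_zpow_emod k hp2]
    rcases Int.emod_two_eq_zero_or_one k with h | h <;> simp [h]
  · rintro (rfl | rfl)
    exacts [⟨0, zpow_zero _⟩, ⟨1, zpow_one _⟩]

theorem coe_closure_insert_of_mem_normalizer {S : Set G} {p : G} (hp : p * p = 1)
    (hpS : p ∈ normalizer (closure S : Set G)) :
    (closure (insert p S) : Set G) = (closure S : Set G) ∪ (p * ·) '' closure S := by
  have hle : closure {p} ≤ normalizer (closure S : Set G) :=
    (closure_le _).2 (Set.singleton_subset_iff.2 hpS)
  rw [Set.insert_eq, closure_union, coe_mul_of_left_le_normalizer_right _ _ hle,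
    coe_closure_singleton_of_mul_self_eq_one hp, Set.insert_eq, Set.union_mul,
    Set.singleton_mul, Set.singleton_mul]
  simp only [one_mul, Set.image_id']

theorem disjoint_coe_image_mul_of_notMem {K : Subgroup G} {p : G} (hp : p ∉ K) :
    Disjoint (K : Set G) ((p * ·) '' K) := by
  rw [Set.disjoint_left]
  rintro _ hpk ⟨k, hk, rfl⟩
  exact hp (by simpa using mul_mem hpk (inv_mem hk))

end Subgroup

namespace MulAction

lemma mem_stabilizer_set_of_mul_self {G α : Type*} [Group G] [MulAction G α]
    {s : Set α} {g : G} (hg : g * g = 1) (hs : ∀ x ∈ s, g • x ∈ s) :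
    g ∈ stabilizer G s := by
  have hsub : g • s ⊆ s := Set.smul_set_subset_iff.2 hs
  refine mem_stabilizer_iff.2 (hsub.antisymm ?_)
  calc s = g • g • s := by rw [smul_smul, hg, one_smul]
    _ ⊆ g • s := Set.smul_set_mono hsub

end MulAction

namespace CvC

lemma bform_comm (n : ℕ) (x y : F n) : bform n x y = bform n y x := by
  simp [bform, mul_comm]

lemma bform_add_right (n : ℕ) (x y z : F n) :
    bform n x (y + z) = bform n x y + bform n x z := by
  rw [bform_comm, bform_add_left, bform_comm n y, bform_comm n z]

lemma bform_sub_right (n : ℕ) (x y z : F n) :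
    bform n x (y - z) = bform n x y - bform n x z := by
  rw [bform_comm, bform_sub_left, bform_comm n y, bform_comm n z]

lemma bform_smul_right (n : ℕ) (c : ℝ) (x z : F n) :
    bform n x (c • z) = c * bform n x z := by
  rw [bform_comm, bform_smul_left, bform_comm]

lemma bform_cvec_right (n : ℕ) (x : F n) : bform n x (cvec n) = 0 := by
  simp [bform, cvec]

lemma bform_eps_eps_of_ne (n i j : ℕ) (hj : 1 ≤ j) (hjn : j ≤ n) (hij : i ≠ j) :
    bform n (eps n i) (eps n j) = 0 := by
  rw [bform_eps_right n _ j hj hjn]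
  unfold eps
  split_ifs <;> simp [Pi.single_apply, Fin.ext_iff]; omega

lemma mul_reflE_mul_inv (n : ℕ) {u : (Module.End ℝ (F n))ˣ}
    (hu : ∀ x y, bform n (u • x) (u • y) = bform n x y) (f : F n) :
    u * reflE n f * u⁻¹ = reflE n (u • f) := by
  by_cases hf : bform n f f = 0
  · rw [reflE, dif_neg (not_not.2 hf), reflE, dif_neg (not_not.2 (by rw [hu, hf])),
      mul_one, mul_inv_cancel]
  have hf' : bform n (u • f) (u • f) ≠ 0 := by rwa [hu]
  refine Units.ext (LinearMap.ext fun g => ?_)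
  rw [reflE, dif_pos hf, reflE, dif_pos hf']
  show u • reflMap n f (u⁻¹ • g) = reflMap n (u • f) g
  rw [reflMap_apply, reflMap_apply, smul_sub, smul_inv_smul, hu, ← hu (u⁻¹ • g), smul_inv_smul,
    smul_comm]

lemma bform_self_aRootF_zero (n : ℕ) (hn : 1 ≤ n) : bform n (aRootF n 0) (aRootF n 0) = 4 := by
  rw [aRootF, if_pos rfl, bform_add_left, bform_add_right, bform_add_right, bform_comm n (cvec n),
    bform_cvec_right, bform_cvec_right, bform_smul_left, bform_smul_right,
    bform_eps_eps n 1 le_rfl hn]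
  norm_num

lemma bform_self_aRootF_self (n : ℕ) (hn : 1 ≤ n) : bform n (aRootF n n) (aRootF n n) = 4 := by
  rw [aRootF, if_neg (by omega), if_pos rfl, bform_smul_left, bform_smul_right,
    bform_eps_eps n n hn le_rfl]
  norm_num

lemma bform_self_aRootF_of_lt (n j : ℕ) (h1 : 1 ≤ j) (h2 : j < n) :
    bform n (aRootF n j) (aRootF n j) = 2 := by
  rw [aRootF, if_neg (by omega), if_neg (by omega), bform_sub_left, bform_sub_right,
    bform_sub_right, bform_eps_eps n j h1 h2.le, bform_eps_eps n (j + 1) (by omega) h2,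
    bform_eps_eps_of_ne n j (j + 1) (by omega) h2 (by omega),
    bform_eps_eps_of_ne n (j + 1) j h1 h2.le (by omega)]
  norm_num

lemma sgen_eq_reflE (n : ℕ) (hn : 1 ≤ n) (k : ℕ) : sgen n k = reflE n (aRootF n k) := by
  rcases eq_or_ne k 0 with rfl | hk
  · have h4 : bform n ((2:ℝ) • eps n 1) ((2:ℝ) • eps n 1) = 4 := by
      rw [bform_smul_left, bform_smul_right, bform_eps_eps n 1 le_rfl hn]; norm_num
    have h0 := bform_self_aRootF_zero n hn
    have heps : ((eps n 1).1, (0:ℝ)) = eps n 1 := by rw [eps, dif_pos ⟨le_rfl, hn⟩]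
    refine Units.ext (LinearMap.ext fun g => ?_)
    rw [sgen, if_pos rfl, Units.val_mul, reflE, dif_pos (by rw [h4]; norm_num), reflE,
      dif_pos (by rw [h0]; norm_num)]
    show tMap n (eps n 1).1 (reflMap n ((2:ℝ) • eps n 1) g) = reflMap n (aRootF n 0) g
    rw [tMap_apply, reflMap_apply, reflMap_apply, h4, h0, heps, bform_sub_left, bform_smul_left,
      bform_smul_left, bform_eps_eps n 1 le_rfl hn, aRootF, if_pos rfl, bform_add_right,
      bform_cvec_right, bform_smul_right, bform_smul_right]
    module
  · rw [sgen, if_neg hk]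

lemma reflE_mul_self (n : ℕ) (f : F n) : reflE n f * reflE n f = 1 := by
  unfold reflE
  split_ifs with hf
  · exact Units.ext (LinearMap.ext (reflMap_invol n f hf))
  · exact mul_one 1

lemma piBU_mul_self (n : ℕ) : piBU n * piBU n = 1 :=
  Units.ext (LinearMap.ext (piBMap_invol n))

lemma piBU_smul (n : ℕ) (x : F n) : piBU n • x = piBMap n x := rfl

lemma bform_piBU_smul (n : ℕ) (x y : F n) :
    bform n (piBU n • x) (piBU n • y) = bform n x y := by
  simp only [bform, piBU_smul, piBMap_apply, neg_mul_neg]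
  exact Equiv.sum_comp Fin.revPerm (fun i => x.1 i * y.1 i)

lemma piBMap_cvec (n : ℕ) : piBMap n (cvec n) = cvec n := by
  ext i <;> simp [cvec]

lemma piBMap_eps (n i : ℕ) (h1 : 1 ≤ i) (h2 : i ≤ n) :
    piBMap n (eps n i) = -eps n (n - i + 1) + (1/2 : ℝ) • cvec n := by
  rw [eps, dif_pos ⟨h1, h2⟩, eps, dif_pos ⟨by omega, by omega⟩]
  refine Prod.ext (funext fun j => ?_) ?_
  · have := j.isLt
    simp only [piBMap_apply, cvec, Prod.fst_add, Prod.fst_neg, Prod.smul_fst, Pi.add_apply,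
      Pi.neg_apply, smul_zero, Pi.zero_apply, add_zero, Pi.single_apply,
      Fin.ext_iff, Fin.val_rev]
    by_cases hj : (j : ℕ) = n - i
    · rw [if_pos (by omega), if_pos (by omega)]
    · rw [if_neg (by omega), if_neg (by omega)]
  · simp [cvec]

lemma piBMap_aRootF (n k : ℕ) (hn : 1 ≤ n) (hk : k ≤ n) :
    piBMap n (aRootF n k) = aRootF n (n - k) := by
  rcases eq_or_ne k 0 with rfl | hk0
  · rw [aRootF, if_pos rfl, aRootF, if_neg (by omega), if_pos (by omega), map_add, map_smul,
      piBMap_cvec, piBMap_eps n 1 le_rfl hn, Nat.sub_add_cancel hn]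
    module
  rcases eq_or_ne k n with rfl | hkn
  · rw [aRootF, if_neg hk0, if_pos rfl, aRootF, if_pos (Nat.sub_self k), map_smul,
      piBMap_eps k k hn le_rfl, Nat.sub_self]
    module
  · rw [aRootF, if_neg hk0, if_neg hkn, aRootF, if_neg (by omega), if_neg (by omega), map_sub,
      piBMap_eps n k (by omega) hk, piBMap_eps n (k + 1) (by omega) (by omega),
      show n - (k + 1) + 1 = n - k by omega]
    module

lemma piBU_mul_sgen_mul_inv (n k : ℕ) (hn : 1 ≤ n) (hk : k ≤ n) :
    piBU n * sgen n k * (piBU n)⁻¹ = sgen n (n - k) := by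
  rw [sgen_eq_reflE n hn, sgen_eq_reflE n hn, mul_reflE_mul_inv n (bform_piBU_smul n),
    piBU_smul, piBMap_aRootF n k hn hk]

lemma piBU_mem_normalizer_Wgrp (n : ℕ) (hn : 1 ≤ n) :
    piBU n ∈ Subgroup.normalizer (Wgrp n : Set (Module.End ℝ (F n))ˣ) := by
  have hflip : (n - ·) '' Set.Icc 0 n = Set.Icc 0 n := by
    ext k
    simp only [Set.mem_image, Set.mem_Icc, zero_le, true_and]
    exact ⟨by rintro ⟨j, -, rfl⟩; omega, fun hk => ⟨n - k, by omega, by omega⟩⟩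
  rw [Subgroup.mem_normalizer_iff_map_conj_eq, Wgrp, MonoidHom.map_closure, Set.image_image]
  congr 1
  calc (fun k => MulAut.conj (piBU n) (sgen n k)) '' Set.Icc 0 n
      = (fun k => sgen n (n - k)) '' Set.Icc 0 n :=
        Set.image_congr fun k hk => piBU_mul_sgen_mul_inv n k hn hk.2
    _ = sgen n '' Set.Icc 0 n := by rw [← Set.image_image, hflip]

def intLattice (n : ℕ) : AddSubgroup (F n) :=
  (AddSubgroup.pi Set.univ fun _ => (Int.castAddHom ℝ).range).prod (Int.castAddHom ℝ).range

lemma mem_intLattice {n : ℕ} {x : F n} :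
    x ∈ intLattice n ↔ (∀ i, ∃ m : ℤ, (m : ℝ) = x.1 i) ∧ ∃ m : ℤ, (m : ℝ) = x.2 := by
  simp only [intLattice, AddSubgroup.mem_prod, AddSubgroup.mem_pi, Set.mem_univ, true_imp_iff,
    AddMonoidHom.mem_range, Int.coe_castAddHom]

lemma eps_mem_intLattice (n i : ℕ) : eps n i ∈ intLattice n := by
  unfold eps
  split_ifs
  · refine mem_intLattice.2 ⟨fun j => ?_, 0, by simp⟩
    by_cases hj : j = ⟨i - 1, by omega⟩
    · exact ⟨1, by simp [hj]⟩
    · exact ⟨0, by simp [hj]⟩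
  · exact zero_mem _

lemma cvec_mem_intLattice (n : ℕ) : cvec n ∈ intLattice n :=
  mem_intLattice.2 ⟨fun _ => ⟨0, by simp [cvec]⟩, 1, by simp [cvec]⟩

lemma aRootF_mem_intLattice (n k : ℕ) : aRootF n k ∈ intLattice n := by
  have he := eps_mem_intLattice n
  unfold aRootF
  split_ifs
  · rw [neg_smul, two_smul]
    exact add_mem (neg_mem (add_mem (he 1) (he 1))) (cvec_mem_intLattice n)
  · rw [two_smul]
    exact add_mem (he n) (he n)
  · exact sub_mem (he k) (he (k + 1))

lemma bform_eps_mem_range {n : ℕ} {y : F n} (hy : y ∈ intLattice n) (i : ℕ) :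
    bform n y (eps n i) ∈ (Int.castAddHom ℝ).range := by
  by_cases hi : 1 ≤ i ∧ i ≤ n
  · obtain ⟨m, hm⟩ := (mem_intLattice.1 hy).1 ⟨i - 1, by omega⟩
    exact ⟨m, by rw [bform_eps_right n y i hi.1 hi.2, ← hm]; rfl⟩
  · rw [eps, dif_neg hi]
    exact ⟨0, by simp [bform]⟩

lemma reflE_smul_mem_intLattice {n : ℕ} {f x : F n} (hf : f ∈ intLattice n)
    (hcoroot : ∀ y ∈ intLattice n, 2 / bform n f f * bform n y f ∈ (Int.castAddHom ℝ).range)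
    (hx : x ∈ intLattice n) : reflE n f • x ∈ intLattice n := by
  unfold reflE
  split_ifs
  · obtain ⟨m, hm⟩ := hcoroot x hx
    show reflMap n f x ∈ intLattice n
    rw [reflMap_apply, ← hm, Int.coe_castAddHom, Int.cast_smul_eq_zsmul]
    exact sub_mem hx (zsmul_mem hf m)
  · rwa [one_smul]

lemma coroot_aRootF_mem_range (n k : ℕ) (hn : 1 ≤ n) (hk : k ≤ n) {y : F n}
    (hy : y ∈ intLattice n) :
    2 / bform n (aRootF n k) (aRootF n k) * bform n y (aRootF n k) ∈ (Int.castAddHom ℝ).range := by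
  have he := bform_eps_mem_range hy
  rcases eq_or_ne k 0 with rfl | hk0
  · rw [bform_self_aRootF_zero n hn, aRootF, if_pos rfl, bform_add_right, bform_cvec_right,
      bform_smul_right, show 2 / 4 * (-2 * bform n y (eps n 1) + 0) = -bform n y (eps n 1) by ring]
    exact neg_mem (he 1)
  rcases eq_or_ne k n with rfl | hkn
  · rw [bform_self_aRootF_self k hn, aRootF, if_neg hk0, if_pos rfl, bform_smul_right,
      show 2 / 4 * (2 * bform k y (eps k k)) = bform k y (eps k k) by ring]
    exact he k
  · rw [bform_self_aRootF_of_lt n k (by omega) (by omega), aRootF, if_neg hk0, if_neg hkn,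
      bform_sub_right, div_self two_ne_zero, one_mul]
    exact sub_mem (he k) (he (k + 1))

lemma Wgrp_le_stabilizer_intLattice (n : ℕ) (hn : 1 ≤ n) :
    Wgrp n ≤ MulAction.stabilizer _ (intLattice n : Set (F n)) := by
  rw [Wgrp, Subgroup.closure_le]
  rintro _ ⟨k, ⟨-, hk⟩, rfl⟩
  rw [sgen_eq_reflE n hn]
  exact MulAction.mem_stabilizer_set_of_mul_self (reflE_mul_self n _) fun x hx =>
    reflE_smul_mem_intLattice (aRootF_mem_intLattice n k)
      (fun y hy => coroot_aRootF_mem_range n k hn hk hy) hx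

lemma piBU_notMem_Wgrp (n : ℕ) (hn : 1 ≤ n) : piBU n ∉ Wgrp n := by
  intro hW
  have hfix := MulAction.mem_stabilizer_iff.1 (Wgrp_le_stabilizer_intLattice n hn hW)
  have hmem : piBU n • eps n 1 ∈ intLattice n := by
    rw [← SetLike.mem_coe, ← hfix]
    exact Set.smul_mem_smul_set (eps_mem_intLattice n 1)
  obtain ⟨-, m, hm⟩ := mem_intLattice.1 hmem
  rw [piBU_smul, piBMap_eps n 1 le_rfl hn, eps, dif_pos ⟨by omega, by omega⟩] at hm
  norm_num [cvec] at hm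
  have : (2 * m : ℤ) = 1 := by exact_mod_cast (by linarith : (2 * m : ℝ) = 1)
  omega

/-- `W` has index 2 in `W^{B∨,RY}`:
`W^{B∨,RY} = W ⊔ π^{B∨}·W` and `π^{B∨} ∉ W`. -/
theorem W_index_two_in_WBRY (n : ℕ) (hn : 2 ≤ n) :
    ((WBRY n : Set (Module.End ℝ (F n))ˣ)
        = (Wgrp n : Set (Module.End ℝ (F n))ˣ)
          ∪ (fun w => piBU n * w) '' (Wgrp n : Set (Module.End ℝ (F n))ˣ)) ∧
    Disjoint ((Wgrp n : Set (Module.End ℝ (F n))ˣ))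
      ((fun w => piBU n * w) '' (Wgrp n : Set (Module.End ℝ (F n))ˣ)) ∧
    piBU n ∉ Wgrp n := by
  have hn1 : 1 ≤ n := by omega
  have hpiB : piBU n ∉ Wgrp n := piBU_notMem_Wgrp n hn1
  exact ⟨Subgroup.coe_closure_insert_of_mem_normalizer (piBU_mul_self n)
      (piBU_mem_normalizer_Wgrp n hn1),
    Subgroup.disjoint_coe_image_mul_of_notMem hpiB, hpiB⟩

end CvC
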